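/- (Stability of the optimal Type-II error under relaxation of the Type-I constraint, from the proof of Theorem 2) Let H be a convex class of measurable functions h : X → ℝ (for any θ ∈ (0,1) and h₁, h₂ ∈ H, θ·h₁ + (1−θ)·h₂ ∈ H), and let φ : ℝ → [0, ∞) be convex, non-decreasing, with φ(0) = 1 and max{φ(h(x)), φ(−h(x))} ≤ C for all h ∈ H, x ∈ X. Define γ(β) = inf{ R'_{φ,μ_{1,T}}(h) : h ∈ H, R_{φ,μ₀}(h) ≤ β }. Let α > 0 and ε₀ > 0, and suppose the set {h ∈ H : R_{φ,μ₀}(h) ≤ α/2} is nonempty. Then γ(α) − γ(α + ε₀) ≤ 2·C·ε₀/α. In particular, if h*_{T,α} and h*_{T,α+ε₀} are minimizers of R'_{φ,μ_{1,T}} over {h ∈ H : R_{φ,μ₀}(h) ≤ α} and {h ∈ H : R_{φ,μ₀}(h) ≤ α + ε₀} respectively, then R'_{φ,μ_{1,T}}(h*_{T,α}) − R'_{φ,μ_{1,T}}(h*_{T,α+ε₀}) ≤ 2·C·ε₀/α. -/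

import Mathlib

/-!
Mix a strictly feasible classifier `h₀` (Type-I risk `≤ α/2`) into the minimizer `h₁` at the
relaxed level `α + ε₀`, with weight `θ = 2ε₀/(2ε₀ + α)`. Convexity of `φ` makes both surrogate
risks convex along the mixture, so its Type-I risk is at most `θ·α/2 + (1-θ)(α + ε₀) = α`,
while its Type-II risk exceeds that of `h₁` by at most `θ·C ≤ 2Cε₀/α`. Being feasible at
level `α`, the mixture bounds both `γ(α)` and the risk of the level-`α` minimizer from above.
-/

open MeasureTheory

/-- Surrogate Type-I error `R_{φ,μ}(h) = E_μ[φ(h(X))]`. -/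
noncomputable def RpopI {X : Type*} [MeasurableSpace X] (φ : ℝ → ℝ) (μ : Measure X)
    (h : X → ℝ) : ℝ :=
  ∫ x, φ (h x) ∂μ

/-- Surrogate Type-II error `R'_{φ,μ}(h) = E_μ[φ(-h(X))]`. -/
noncomputable def RpopII {X : Type*} [MeasurableSpace X] (φ : ℝ → ℝ) (μ : Measure X)
    (h : X → ℝ) : ℝ :=
  ∫ x, φ (-h x) ∂μ

/-- Empirical surrogate Type-I error: the sample average of `φ (h ·)`. -/
noncomputable def RempI {X : Type*} (φ : ℝ → ℝ) {n : ℕ} (xs : Fin n → X)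
    (h : X → ℝ) : ℝ :=
  (1 / n : ℝ) * ∑ i, φ (h (xs i))

/-- Empirical surrogate Type-II error: the sample average of `φ (-h ·)`. -/
noncomputable def RempII {X : Type*} (φ : ℝ → ℝ) {n : ℕ} (xs : Fin n → X)
    (h : X → ℝ) : ℝ :=
  (1 / n : ℝ) * ∑ i, φ (-h (xs i))

/-- The optimal surrogate Type-II error curve
`γ(β) = inf { R'_{φ,μ₁T}(h) : h ∈ H, R_{φ,μ₀}(h) ≤ β }`. -/
noncomputable def gammaCurve {X : Type*} [MeasurableSpace X] (H : Set (X → ℝ))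
    (φ : ℝ → ℝ) (μ₀ μT : Measure X) (β : ℝ) : ℝ :=
  sInf (RpopII φ μT '' {h | h ∈ H ∧ RpopI φ μ₀ h ≤ β})

section Risk

variable {X : Type*} [MeasurableSpace X] {φ : ℝ → ℝ} {μ : Measure X}

theorem RpopII_eq_RpopI_neg (h : X → ℝ) : RpopII φ μ h = RpopI φ μ (fun x => -h x) := rfl

theorem RpopI_nonneg (hφ_nonneg : ∀ t, 0 ≤ φ t) (h : X → ℝ) : 0 ≤ RpopI φ μ h :=
  integral_nonneg fun _ => hφ_nonneg _

theorem integrable_comp_of_le [IsFiniteMeasure μ] (hφ_meas : Measurable φ)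
    (hφ_nonneg : ∀ t, 0 ≤ φ t) {h : X → ℝ} (hh : Measurable h) {C : ℝ}
    (hC : ∀ x, φ (h x) ≤ C) : Integrable (fun x => φ (h x)) μ :=
  Integrable.of_bound (hφ_meas.comp hh).aestronglyMeasurable C <| .of_forall fun x => by
    rw [Real.norm_of_nonneg (hφ_nonneg _)]
    exact hC x

theorem RpopI_le_of_forall_le [IsProbabilityMeasure μ] {h : X → ℝ}
    (hint : Integrable (fun x => φ (h x)) μ) {C : ℝ} (hC : ∀ x, φ (h x) ≤ C) :
    RpopI φ μ h ≤ C := by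
  simpa [RpopI] using integral_mono hint (integrable_const C) hC

theorem RpopI_convexCombination_le [IsFiniteMeasure μ] (hφ_convex : ConvexOn ℝ Set.univ φ)
    (hφ_meas : Measurable φ) (hφ_nonneg : ∀ t, 0 ≤ φ t) {f g : X → ℝ}
    (hf : Measurable f) (hg : Measurable g) {C : ℝ}
    (hfC : ∀ x, φ (f x) ≤ C) (hgC : ∀ x, φ (g x) ≤ C) {θ : ℝ} (hθ₀ : 0 ≤ θ) (hθ₁ : θ ≤ 1) :
    RpopI φ μ (fun x => θ * f x + (1 - θ) * g x) ≤
      θ * RpopI φ μ f + (1 - θ) * RpopI φ μ g := by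
  have hpoint : ∀ x, φ (θ * f x + (1 - θ) * g x) ≤ θ * φ (f x) + (1 - θ) * φ (g x) :=
    fun x => hφ_convex.2 (Set.mem_univ _) (Set.mem_univ _) hθ₀ (by linarith) (by ring)
  have hmixC : ∀ x, φ (θ * f x + (1 - θ) * g x) ≤ C := fun x => by
    nlinarith [hpoint x, hfC x, hgC x]
  have hfi := integrable_comp_of_le (μ := μ) hφ_meas hφ_nonneg hf hfC
  have hgi := integrable_comp_of_le (μ := μ) hφ_meas hφ_nonneg hg hgC
  calc RpopI φ μ (fun x => θ * f x + (1 - θ) * g x)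
      ≤ ∫ x, (θ * φ (f x) + (1 - θ) * φ (g x)) ∂μ :=
        integral_mono (integrable_comp_of_le hφ_meas hφ_nonneg (by fun_prop) hmixC)
          ((hfi.const_mul θ).add (hgi.const_mul (1 - θ))) hpoint
    _ = θ * RpopI φ μ f + (1 - θ) * RpopI φ μ g := by
        rw [integral_add (hfi.const_mul θ) (hgi.const_mul (1 - θ)), integral_const_mul,
          integral_const_mul]
        rfl

theorem RpopII_convexCombination_le [IsFiniteMeasure μ] (hφ_convex : ConvexOn ℝ Set.univ φ)
    (hφ_meas : Measurable φ) (hφ_nonneg : ∀ t, 0 ≤ φ t) {f g : X → ℝ}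
    (hf : Measurable f) (hg : Measurable g) {C : ℝ}
    (hfC : ∀ x, φ (-f x) ≤ C) (hgC : ∀ x, φ (-g x) ≤ C) {θ : ℝ} (hθ₀ : 0 ≤ θ) (hθ₁ : θ ≤ 1) :
    RpopII φ μ (fun x => θ * f x + (1 - θ) * g x) ≤
      θ * RpopII φ μ f + (1 - θ) * RpopII φ μ g := by
  have hneg : (fun x => -(θ * f x + (1 - θ) * g x)) =
      fun x => θ * (-f x) + (1 - θ) * (-g x) := funext fun x => by ring
  rw [RpopII_eq_RpopI_neg, hneg]
  exact RpopI_convexCombination_le (f := fun x => -f x) (g := fun x => -g x) hφ_convex hφ_meas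
    hφ_nonneg hf.neg hg.neg hfC hgC hθ₀ hθ₁

end Risk

section Curve

variable {X : Type*} [MeasurableSpace X] {H : Set (X → ℝ)} {φ : ℝ → ℝ} {μ₀ μT : Measure X}

theorem gammaCurve_le_RpopII (hφ_nonneg : ∀ t, 0 ≤ φ t) {β : ℝ} {h : X → ℝ} (hh : h ∈ H)
    (hfeas : RpopI φ μ₀ h ≤ β) : gammaCurve H φ μ₀ μT β ≤ RpopII φ μT h :=
  csInf_le ⟨0, by rintro _ ⟨g, -, rfl⟩; exact RpopI_nonneg hφ_nonneg _⟩ ⟨h, ⟨hh, hfeas⟩, rfl⟩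

theorem gammaCurve_eq_RpopII_of_isMin {β : ℝ} {h : X → ℝ} (hh : h ∈ H)
    (hfeas : RpopI φ μ₀ h ≤ β)
    (hopt : ∀ g ∈ H, RpopI φ μ₀ g ≤ β → RpopII φ μT h ≤ RpopII φ μT g) :
    gammaCurve H φ μ₀ μT β = RpopII φ μT h :=
  IsLeast.csInf_eq ⟨⟨h, ⟨hh, hfeas⟩, rfl⟩, by
    rintro _ ⟨g, ⟨hg, hgfeas⟩, rfl⟩
    exact hopt g hg hgfeas⟩

theorem exists_mixing_weight {α ε₀ : ℝ} (hα : 0 < α) (hε₀ : 0 < ε₀) :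
    ∃ θ ∈ Set.Ioo (0 : ℝ) 1, θ * (α / 2) + (1 - θ) * (α + ε₀) = α ∧ θ ≤ 2 * ε₀ / α :=
  ⟨2 * ε₀ / (2 * ε₀ + α), ⟨by positivity, (div_lt_one (by positivity)).2 (by linarith)⟩,
    by field_simp; ring, div_le_div_of_nonneg_left (by positivity) hα (by linarith)⟩

theorem exists_mem_RpopI_le_RpopII_le_add (hHmeas : ∀ h ∈ H, Measurable h)
    (hHconvex : ∀ θ : ℝ, θ ∈ Set.Ioo (0 : ℝ) 1 → ∀ h₁ ∈ H, ∀ h₂ ∈ H,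
      (fun x => θ * h₁ x + (1 - θ) * h₂ x) ∈ H)
    (hφ_nonneg : ∀ t, 0 ≤ φ t) (hφ_meas : Measurable φ) (hφ_convex : ConvexOn ℝ Set.univ φ)
    [IsFiniteMeasure μ₀] [IsProbabilityMeasure μT] {C : ℝ}
    (hφ_bound : ∀ h ∈ H, ∀ x : X, max (φ (h x)) (φ (-h x)) ≤ C)
    {α ε₀ : ℝ} (hα : 0 < α) (hε₀ : 0 < ε₀)
    {h₀ : X → ℝ} (h₀_mem : h₀ ∈ H) (h₀_feas : RpopI φ μ₀ h₀ ≤ α / 2)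
    {h₁ : X → ℝ} (h₁_mem : h₁ ∈ H) (h₁_feas : RpopI φ μ₀ h₁ ≤ α + ε₀) :
    ∃ g ∈ H, RpopI φ μ₀ g ≤ α ∧ RpopII φ μT g ≤ RpopII φ μT h₁ + 2 * C * ε₀ / α := by
  have hbound_pos : ∀ h ∈ H, ∀ x, φ (h x) ≤ C := fun h hh x =>
    (le_max_left _ _).trans (hφ_bound h hh x)
  have hbound_neg : ∀ h ∈ H, ∀ x, φ (-h x) ≤ C := fun h hh x =>
    (le_max_right _ _).trans (hφ_bound h hh x)
  obtain ⟨θ, ⟨hθ₀, hθ₁⟩, hθ_level, hθ_le⟩ := exists_mixing_weight hα hε₀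
  refine ⟨_, hHconvex θ ⟨hθ₀, hθ₁⟩ h₀ h₀_mem h₁ h₁_mem, ?_, ?_⟩
  · calc RpopI φ μ₀ (fun x => θ * h₀ x + (1 - θ) * h₁ x)
        ≤ θ * RpopI φ μ₀ h₀ + (1 - θ) * RpopI φ μ₀ h₁ :=
          RpopI_convexCombination_le hφ_convex hφ_meas hφ_nonneg (hHmeas h₀ h₀_mem)
            (hHmeas h₁ h₁_mem) (hbound_pos h₀ h₀_mem) (hbound_pos h₁ h₁_mem) hθ₀.le hθ₁.le
      _ ≤ θ * (α / 2) + (1 - θ) * (α + ε₀) := by gcongr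
      _ = α := hθ_level
  · have hII₀ : RpopII φ μT h₀ ≤ C := RpopI_le_of_forall_le
      (integrable_comp_of_le hφ_meas hφ_nonneg (hHmeas h₀ h₀_mem).neg (hbound_neg h₀ h₀_mem))
      (hbound_neg h₀ h₀_mem)
    have hII₁ : 0 ≤ RpopII φ μT h₁ := RpopI_nonneg hφ_nonneg _
    have hθC : θ * C ≤ 2 * C * ε₀ / α := by
      have hC : 0 ≤ C := (RpopI_nonneg hφ_nonneg _).trans hII₀
      calc θ * C ≤ 2 * ε₀ / α * C := by gcongr
        _ = 2 * C * ε₀ / α := by ring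
    calc RpopII φ μT (fun x => θ * h₀ x + (1 - θ) * h₁ x)
        ≤ θ * RpopII φ μT h₀ + (1 - θ) * RpopII φ μT h₁ :=
          RpopII_convexCombination_le hφ_convex hφ_meas hφ_nonneg (hHmeas h₀ h₀_mem)
            (hHmeas h₁ h₁_mem) (hbound_neg h₀ h₀_mem) (hbound_neg h₁ h₁_mem) hθ₀.le hθ₁.le
      _ ≤ RpopII φ μT h₁ + θ * C := by nlinarith
      _ ≤ RpopII φ μT h₁ + 2 * C * ε₀ / α := by linarith

end Curve

theorem gammaCurve_relaxation_stability_general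
    {X : Type*} [MeasurableSpace X]
    (H : Set (X → ℝ)) (hHmeas : ∀ h ∈ H, Measurable h)
    (hHconvex : ∀ θ : ℝ, θ ∈ Set.Ioo (0 : ℝ) 1 → ∀ h₁ ∈ H, ∀ h₂ ∈ H,
      (fun x => θ * h₁ x + (1 - θ) * h₂ x) ∈ H)
    (φ : ℝ → ℝ) (C : ℝ)
    (hφ_nonneg : ∀ t : ℝ, 0 ≤ φ t) (hφ_mono : Monotone φ)
    (hφ_convex : ConvexOn ℝ Set.univ φ)
    (μ₀ μT : Measure X) [IsProbabilityMeasure μ₀] [IsProbabilityMeasure μT]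
    (hφ_bound : ∀ h ∈ H, ∀ x : X, max (φ (h x)) (φ (-h x)) ≤ C)
    (α ε₀ : ℝ) (hα : 0 < α) (hε₀ : 0 < ε₀)
    (hhalf : {h | h ∈ H ∧ RpopI φ μ₀ h ≤ α / 2}.Nonempty)
    -- the constrained minimizers h*_{T,α} and h*_{T,α+ε₀}
    (hTα : X → ℝ)
    (hTα_opt : ∀ h ∈ H, RpopI φ μ₀ h ≤ α → RpopII φ μT hTα ≤ RpopII φ μT h)
    (hTαε : X → ℝ) (hTαε_mem : hTαε ∈ H) (hTαε_feas : RpopI φ μ₀ hTαε ≤ α + ε₀)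
    (hTαε_opt : ∀ h ∈ H, RpopI φ μ₀ h ≤ α + ε₀ → RpopII φ μT hTαε ≤ RpopII φ μT h) :
    gammaCurve H φ μ₀ μT α - gammaCurve H φ μ₀ μT (α + ε₀) ≤ 2 * C * ε₀ / α ∧
      RpopII φ μT hTα - RpopII φ μT hTαε ≤ 2 * C * ε₀ / α := by
  obtain ⟨h₀, h₀_mem, h₀_feas⟩ := hhalf
  obtain ⟨g, g_mem, g_feas, g_risk⟩ :=
    exists_mem_RpopI_le_RpopII_le_add (μT := μT) hHmeas hHconvex hφ_nonneg hφ_mono.measurable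
      hφ_convex hφ_bound hα hε₀ h₀_mem h₀_feas hTαε_mem hTαε_feas
  rw [gammaCurve_eq_RpopII_of_isMin hTαε_mem hTαε_feas hTαε_opt]
  exact ⟨by linarith [gammaCurve_le_RpopII (μT := μT) hφ_nonneg g_mem g_feas],
    by linarith [hTα_opt g g_mem g_feas]⟩

/-- from the proof of Theorem 2: for a convex class `H`, a convex
non-decreasing loss `φ ≥ 0` with `φ 0 = 1` bounded by `C` on `H`, if
`{h ∈ H : R_{φ,μ₀}(h) ≤ α/2}` is nonempty, then `γ(α) − γ(α + ε₀) ≤ 2·C·ε₀/α`; in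
particular the corresponding constrained minimizers satisfy
`R'_{φ,μ₁T}(h*_{T,α}) − R'_{φ,μ₁T}(h*_{T,α+ε₀}) ≤ 2·C·ε₀/α`. -/
theorem gammaCurve_relaxation_stability
    {X : Type*} [MeasurableSpace X]
    (H : Set (X → ℝ)) (hHmeas : ∀ h ∈ H, Measurable h)
    (hHconvex : ∀ θ : ℝ, θ ∈ Set.Ioo (0 : ℝ) 1 → ∀ h₁ ∈ H, ∀ h₂ ∈ H,
      (fun x => θ * h₁ x + (1 - θ) * h₂ x) ∈ H)
    (φ : ℝ → ℝ) (C : ℝ)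
    (hφ_nonneg : ∀ t : ℝ, 0 ≤ φ t) (hφ_mono : Monotone φ) (hφ_zero : φ 0 = 1)
    (hφ_convex : ConvexOn ℝ Set.univ φ)
    (μ₀ μT : Measure X) [IsProbabilityMeasure μ₀] [IsProbabilityMeasure μT]
    (hφ_bound : ∀ h ∈ H, ∀ x : X, max (φ (h x)) (φ (-h x)) ≤ C)
    (α ε₀ : ℝ) (hα : 0 < α) (hε₀ : 0 < ε₀)
    (hhalf : {h | h ∈ H ∧ RpopI φ μ₀ h ≤ α / 2}.Nonempty)
    -- the constrained minimizers h*_{T,α} and h*_{T,α+ε₀}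
    (hTα : X → ℝ) (hTα_mem : hTα ∈ H) (hTα_feas : RpopI φ μ₀ hTα ≤ α)
    (hTα_opt : ∀ h ∈ H, RpopI φ μ₀ h ≤ α → RpopII φ μT hTα ≤ RpopII φ μT h)
    (hTαε : X → ℝ) (hTαε_mem : hTαε ∈ H) (hTαε_feas : RpopI φ μ₀ hTαε ≤ α + ε₀)
    (hTαε_opt : ∀ h ∈ H, RpopI φ μ₀ h ≤ α + ε₀ → RpopII φ μT hTαε ≤ RpopII φ μT h) :
    gammaCurve H φ μ₀ μT α - gammaCurve H φ μ₀ μT (α + ε₀) ≤ 2 * C * ε₀ / α ∧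
      RpopII φ μT hTα - RpopII φ μT hTαε ≤ 2 * C * ε₀ / α :=
  gammaCurve_relaxation_stability_general H hHmeas hHconvex φ C hφ_nonneg hφ_mono hφ_convex μ₀ μT
    hφ_bound α ε₀ hα hε₀ hhalf hTα hTα_opt hTαε hTαε_mem hTαε_feas hTαε_opt
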